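/- arXiv:2304.10962 — 2 statements merged into one kernel-verified Lean document; each statement's English description precedes it below -/
import Mathlib

section
/- Let A = (Q, Σ, δ, s, F) be an input-consistent DFA in which the initial state s has no incoming transitions and every state is reachable from s. Then the relation <_A is a co-lex order on A (i.e., it is a partial order satisfying Axiom 1 and Axiom 2), and the width of <_A equals the minimum width over all co-lex orders on A. -/
/-- A (possibly left-infinite) string over alphabet `A`, indexed from the END:
`f i` is the `i`-th character from the right, and `⊥` means the position is
past the beginning of the string.  The elements of `Σ* ∪ Σ^ω` are the
well-formed (`CStr.WF`) such functions. -/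
abbrev CStr (A : Type*) := ℕ → WithBot A

/-- Well-formed: once we run out of characters going leftwards, it stays so. -/
def CStr.WF {A : Type*} (f : CStr A) : Prop := ∀ i, f i = ⊥ → f (i + 1) = ⊥

/-- The string is finite (an element of `Σ*`). -/
def CStr.Finite {A : Type*} (f : CStr A) : Prop := ∃ i, f i = ⊥

/-- Length of a finite string. -/
noncomputable def CStr.length {A : Type*} (f : CStr A) : ℕ := sInf {i | f i = ⊥}

/-- A finite string, given as a list read left-to-right, viewed as a `CStr`. -/
def CStr.ofList {A : Type*} (w : List A) : CStr A := fun i =>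
  if h : i < w.length then (w.get ⟨w.length - 1 - i, by omega⟩ : WithBot A) else ⊥

/-- The co-lexicographic (strict) order on `Σ* ∪ Σ^ω`: compare the last
characters first (position `0`), a missing character (`⊥`) being smaller
than every character of the alphabet. -/
def colexLt {A : Type*} [LinearOrder A] (f g : CStr A) : Prop :=
  ∃ i, (∀ j, j < i → f j = g j) ∧ f i < g i

/-- The non-strict co-lex order. -/
def colexLe {A : Type*} [LinearOrder A] (f g : CStr A) : Prop := colexLt f g ∨ f = g

/-- `g` is the greatest lower bound (infimum) of `S` in `(Σ* ∪ Σ^ω, ≤)`. -/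
def IsColexGLB {A : Type*} [LinearOrder A] (S : Set (CStr A)) (g : CStr A) : Prop :=
  g.WF ∧ (∀ f ∈ S, colexLe g f) ∧ ∀ h, CStr.WF h → (∀ f ∈ S, colexLe h f) → colexLe h g

/-- `g` is the least upper bound (supremum) of `S` in `(Σ* ∪ Σ^ω, ≤)`. -/
def IsColexLUB {A : Type*} [LinearOrder A] (S : Set (CStr A)) (g : CStr A) : Prop :=
  g.WF ∧ (∀ f ∈ S, colexLe f g) ∧ ∀ h, CStr.WF h → (∀ f ∈ S, colexLe f h) → colexLe g h

/-- A DFA `(Q, A, δ, start, accept)` with a partial transition function. -/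
structure PDFA (A Q : Type*) where
  δ : Q → A → Option Q
  start : Q
  accept : Set Q

/-- The transition function extended to finite strings (read left-to-right). -/
def PDFA.δStar {A Q : Type*} (M : PDFA A Q) : Q → List A → Option Q
  | q, [] => some q
  | q, a :: w => (M.δ q a).bind fun q' => M.δStar q' w

/-- `I_u`: the set of finite strings reaching `u` from the initial state. -/
def PDFA.I {A Q : Type*} (M : PDFA A Q) (u : Q) : Set (List A) :=
  {w | M.δStar M.start w = some u}

/-- The initial state has no incoming transitions. -/
def PDFA.NoIncomingStart {A Q : Type*} (M : PDFA A Q) : Prop :=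
  ∀ v a, M.δ v a ≠ some M.start

/-- Every state is reachable from the initial state. -/
def PDFA.Reachable {A Q : Type*} (M : PDFA A Q) : Prop :=
  ∀ u, ∃ w : List A, M.δStar M.start w = some u

/-- Input consistency: all transitions entering a state `u` carry the same
label `lam u`. -/
def PDFA.InputConsistent {A Q : Type*} (M : PDFA A Q) (lam : Q → A) : Prop :=
  ∀ v a u, M.δ v a = some u → lam u = a

/-- The maximum co-lex order `<_A` on the states of a DFA:
`u <_A v` iff `α < β` for every `α ∈ I_u` and every `β ∈ I_v`. -/
def PDFA.colexStateLt {A Q : Type*} [LinearOrder A] (M : PDFA A Q) (u v : Q) : Prop :=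
  ∀ α ∈ M.I u, ∀ β ∈ M.I v, colexLt (CStr.ofList α) (CStr.ofList β)

/-- The width of a (strict) partial order on a finite set of states: the size
of its largest antichain. -/
noncomputable def widthOf {Q : Type*} [Fintype Q] (r : Q → Q → Prop) : ℕ :=
  sSup {n | ∃ S : Finset Q, S.card = n ∧ ∀ u ∈ S, ∀ v ∈ S, u ≠ v → ¬ r u v ∧ ¬ r v u}

/-- `r` is a co-lex order on the DFA `M` with state labeling
`lam : Q → WithBot A` (`lam start = ⊥` plays the role of the special symbol
`#`, smaller than every character of `Σ`): a strict partial order on the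
states satisfying Axiom 1 and Axiom 2. -/
def IsColexOrderOn {A Q : Type*} [LinearOrder A] (M : PDFA A Q) (lam : Q → WithBot A)
    (r : Q → Q → Prop) : Prop :=
  (∀ u, ¬ r u u) ∧ (∀ u v w, r u v → r v w → r u w) ∧
  (∀ u v, r u v → lam u ≤ lam v) ∧
  (∀ a u v u' v', M.δ u' a = some u → M.δ v' a = some v → r u v → (r u' v' ∨ u' = v'))

section Aux

variable {A Q : Type*} [LinearOrder A]

lemma ofList_nil (i : ℕ) : CStr.ofList ([] : List A) i = ⊥ := by
  simp [CStr.ofList]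

lemma ofList_concat_zero (w : List A) (a : A) :
    CStr.ofList (w ++ [a]) 0 = (a : WithBot A) := by
  unfold CStr.ofList
  rw [dif_pos (by simp)]
  have h : (w ++ [a]).length - 1 - 0 = w.length := by simp
  simp only [List.get_eq_getElem, h]
  rw [List.getElem_concat_length]
  rfl

lemma ofList_concat_succ (w : List A) (a : A) (i : ℕ) :
    CStr.ofList (w ++ [a]) (i + 1) = CStr.ofList w i := by
  unfold CStr.ofList
  by_cases h : i < w.length
  · have hl : (w ++ [a]).length = w.length + 1 := by simp
    rw [dif_pos (by omega), dif_pos h]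
    simp only [List.get_eq_getElem]
    have h1 : (w ++ [a]).length - 1 - (i + 1) = w.length - 1 - i := by omega
    rw [List.getElem_append_left (by omega)]
    simp only [h1]
  · rw [dif_neg (by simp; omega), dif_neg h]

lemma eq_nil_or_append {B : Type*} (l : List B) : l = [] ∨ ∃ L b, l = L ++ [b] := by
  rcases List.eq_nil_or_concat l with h | ⟨L, b, h⟩
  · exact Or.inl h
  · exact Or.inr ⟨L, b, by rw [h, List.concat_eq_append]⟩

lemma colexLt_irrefl (f : CStr A) : ¬ colexLt f f := by
  rintro ⟨i, -, hi⟩; exact lt_irrefl _ hi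

lemma colexLt_trans {f g h : CStr A} (h1 : colexLt f g) (h2 : colexLt g h) :
    colexLt f h := by
  obtain ⟨i, hi1, hi2⟩ := h1
  obtain ⟨k, hk1, hk2⟩ := h2
  refine ⟨min i k, fun j hj => ?_, ?_⟩
  · rw [hi1 j (lt_of_lt_of_le hj (min_le_left _ _)),
      hk1 j (lt_of_lt_of_le hj (min_le_right _ _))]
  · rcases lt_trichotomy i k with hik | hik | hik
    · rw [min_eq_left hik.le]; rw [← hk1 i hik]; exact hi2
    · rw [hik, min_self]; rw [hik] at hi2; exact lt_trans hi2 hk2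
    · rw [min_eq_right hik.le, hi1 k hik]; exact hk2

lemma colexLt_concat_iff (α β : List A) (a : A) :
    colexLt (CStr.ofList (α ++ [a])) (CStr.ofList (β ++ [a])) ↔
      colexLt (CStr.ofList α) (CStr.ofList β) := by
  constructor
  · rintro ⟨i, hpre, hi⟩
    cases i with
    | zero => rw [ofList_concat_zero, ofList_concat_zero] at hi; exact absurd hi (lt_irrefl _)
    | succ k =>
      refine ⟨k, fun j hj => ?_, ?_⟩
      · have := hpre (j + 1) (by omega)
        rwa [ofList_concat_succ, ofList_concat_succ] at this
      · rwa [ofList_concat_succ, ofList_concat_succ] at hi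
  · rintro ⟨i, hpre, hi⟩
    refine ⟨i + 1, fun j hj => ?_, ?_⟩
    · cases j with
      | zero => rw [ofList_concat_zero, ofList_concat_zero]
      | succ k => rw [ofList_concat_succ, ofList_concat_succ]; exact hpre k (by omega)
    · rwa [ofList_concat_succ, ofList_concat_succ]

lemma PDFA.δStar_append (M : PDFA A Q) (q : Q) (w : List A) (a : A) :
    M.δStar q (w ++ [a]) = (M.δStar q w).bind (fun p => M.δ p a) := by
  induction w generalizing q with
  | nil => simp [PDFA.δStar]
  | cons b w ih =>
    show (M.δ q b).bind _ = ((M.δ q b).bind _).bind _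
    cases M.δ q b with
    | none => rfl
    | some p => exact ih p

lemma mem_I_nil {M : PDFA A Q} {u : Q} (h : [] ∈ M.I u) : u = M.start := by
  simpa [PDFA.I, PDFA.δStar] using h.symm

lemma mem_I_concat_iff {M : PDFA A Q} {u : Q} {w : List A} {a : A}
    (h : w ++ [a] ∈ M.I u) : ∃ u', w ∈ M.I u' ∧ M.δ u' a = some u := by
  have := h
  rw [PDFA.I, Set.mem_setOf_eq, PDFA.δStar_append] at this
  cases hw : M.δStar M.start w with
  | none => rw [hw] at this; exact absurd this (by simp)
  | some p => rw [hw] at this; exact ⟨p, hw, this⟩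

lemma mem_I_concat {M : PDFA A Q} {u' u : Q} {w : List A} {a : A}
    (hw : w ∈ M.I u') (h : M.δ u' a = some u) : w ++ [a] ∈ M.I u := by
  rw [PDFA.I, Set.mem_setOf_eq, PDFA.δStar_append, hw]
  exact h

lemma lastChar {M : PDFA A Q} {lam : Q → WithBot A}
    (hic : ∀ v a u, M.δ v a = some u → lam u = (a : WithBot A))
    (hlams : lam M.start = ⊥)
    {u : Q} {α : List A} (hα : α ∈ M.I u) : CStr.ofList α 0 = lam u := by
  rcases eq_nil_or_append α with rfl | ⟨w, a, rfl⟩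
  · rw [ofList_nil, mem_I_nil hα, hlams]
  · obtain ⟨u', -, hδ⟩ := mem_I_concat_iff hα
    rw [ofList_concat_zero, hic u' a u hδ]

/-- Every co-lex order is contained in the maximum co-lex order. -/
lemma colex_order_sub_max {M : PDFA A Q} {lam : Q → WithBot A} {r : Q → Q → Prop}
    (hic : ∀ v a u, M.δ v a = some u → lam u = (a : WithBot A))
    (hlams : lam M.start = ⊥)
    (hr : IsColexOrderOn M lam r) :
    ∀ n (α β : List A) (u v : Q), α.length + β.length ≤ n → r u v →
      α ∈ M.I u → β ∈ M.I v → colexLt (CStr.ofList α) (CStr.ofList β) := by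
  intro n
  induction n with
  | zero =>
    intro α β u v hlen hruv hα hβ
    have hα0 : α = [] := by
      cases α with | nil => rfl | cons x xs => simp at hlen
    have hβ0 : β = [] := by
      cases β with | nil => rfl | cons x xs => simp at hlen
    subst hα0; subst hβ0
    rw [mem_I_nil hα, mem_I_nil hβ] at hruv
    exact absurd hruv (hr.1 _)
  | succ n ih =>
    intro α β u v hlen hruv hα hβ
    rcases eq_nil_or_append α with rfl | ⟨α', a, rfl⟩
    · have hu : u = M.start := mem_I_nil hα
      rcases eq_nil_or_append β with rfl | ⟨β', b, rfl⟩
      · have hv : v = M.start := mem_I_nil hβ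
        rw [hu, hv] at hruv
        exact absurd hruv (hr.1 _)
      · refine ⟨0, fun j hj => absurd hj (Nat.not_lt_zero j), ?_⟩
        rw [ofList_nil, ofList_concat_zero]
        exact WithBot.bot_lt_coe b
    · obtain ⟨u', hu'I, hu'δ⟩ := mem_I_concat_iff hα
      have hla : lam u = (a : WithBot A) := hic u' a u hu'δ
      rcases eq_nil_or_append β with rfl | ⟨β', b, rfl⟩
      · have hv : v = M.start := mem_I_nil hβ
        have hle := hr.2.2.1 u v hruv
        rw [hla, hv, hlams] at hle
        exact absurd hle (by simp)
      · obtain ⟨v', hv'I, hv'δ⟩ := mem_I_concat_iff hβ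
        have hlb : lam v = (b : WithBot A) := hic v' b v hv'δ
        have hab : a ≤ b := by
          have hle := hr.2.2.1 u v hruv
          rw [hla, hlb] at hle
          exact_mod_cast hle
        rcases lt_or_eq_of_le hab with hab | hab
        · refine ⟨0, fun j hj => absurd hj (Nat.not_lt_zero j), ?_⟩
          rw [ofList_concat_zero, ofList_concat_zero]
          exact_mod_cast hab
        · subst hab
          rcases hr.2.2.2 a u v u' v' hu'δ hv'δ hruv with h' | h'
          · have hlen' : α'.length + β'.length ≤ n := by
              simp only [List.length_append, List.length_singleton] at hlen; omega
            exact (colexLt_concat_iff α' β' a).2 (ih α' β' u' v' hlen' h' hu'I hv'I)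
          · subst h'
            rw [hu'δ] at hv'δ
            have huv : u = v := by injection hv'δ
            rw [huv] at hruv
            exact absurd hruv (hr.1 _)

lemma colex_order_le_max {M : PDFA A Q} {lam : Q → WithBot A} {r : Q → Q → Prop}
    (hic : ∀ v a u, M.δ v a = some u → lam u = (a : WithBot A))
    (hlams : lam M.start = ⊥)
    (hr : IsColexOrderOn M lam r) {u v : Q} (huv : r u v) : M.colexStateLt u v := by
  intro α hα β hβ
  exact colex_order_sub_max hic hlams hr (α.length + β.length) α β u v le_rfl huv hα hβ

lemma widthOf_antitone {Q : Type*} [Fintype Q] {r r' : Q → Q → Prop}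
    (h : ∀ u v, r u v → r' u v) : widthOf r' ≤ widthOf r := by
  apply csSup_le_csSup
  · refine ⟨Fintype.card Q, ?_⟩
    rintro n ⟨S, hS, -⟩
    rw [← hS]
    exact Finset.card_le_univ S
  · exact ⟨0, ∅, by simp, by simp⟩
  · rintro n ⟨S, h1, h2⟩
    refine ⟨S, h1, fun u hu v hv hne => ?_⟩
    obtain ⟨p, q⟩ := h2 u hu v hv hne
    exact ⟨fun hx => p (h _ _ hx), fun hx => q (h _ _ hx)⟩

end Aux

/-- For an input-consistent DFA whose initial state has no
incoming transitions and all of whose states are reachable, the relation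
`<_A` is a co-lex order on `A` (a partial order satisfying Axiom 1 and
Axiom 2), and its width equals the minimum width over all co-lex orders
on `A`. -/
theorem maximum_colex_order_is_colex_order_of_minimum_width
    {A Q : Type*} [LinearOrder A] [Fintype A] [Fintype Q]
    (M : PDFA A Q) (lam : Q → WithBot A)
    (hic : ∀ v a u, M.δ v a = some u → lam u = (a : WithBot A))
    (hlams : lam M.start = ⊥)
    (hstart : M.NoIncomingStart) (hreach : M.Reachable) :
    IsColexOrderOn M lam M.colexStateLt ∧
      widthOf M.colexStateLt = sInf {n | ∃ r, IsColexOrderOn M lam r ∧ widthOf r = n} := by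
  have hmax : IsColexOrderOn M lam M.colexStateLt := by
    refine ⟨?_, ?_, ?_, ?_⟩
    · intro u h
      obtain ⟨α, hα⟩ := hreach u
      exact colexLt_irrefl _ (h α hα α hα)
    · intro u v w h1 h2 α hα γ hγ
      obtain ⟨β, hβ⟩ := hreach v
      exact colexLt_trans (h1 α hα β hβ) (h2 β hβ γ hγ)
    · intro u v h
      obtain ⟨α, hα⟩ := hreach u
      obtain ⟨β, hβ⟩ := hreach v
      obtain ⟨i, hpre, hi⟩ := h α hα β hβ
      rw [← lastChar hic hlams hα, ← lastChar hic hlams hβ]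
      cases i with
      | zero => exact le_of_lt hi
      | succ k => exact le_of_eq (hpre 0 (Nat.succ_pos k))
    · intro a u v u' v' hδu hδv huv
      by_cases h : u' = v'
      · exact Or.inr h
      · refine Or.inl (fun α' hα' β' hβ' => ?_)
        have h1 : α' ++ [a] ∈ M.I u := mem_I_concat hα' hδu
        have h2 : β' ++ [a] ∈ M.I v := mem_I_concat hβ' hδv
        exact (colexLt_concat_iff α' β' a).1 (huv _ h1 _ h2)
  refine ⟨hmax, ?_⟩
  have hmem : widthOf M.colexStateLt ∈
      {n | ∃ r, IsColexOrderOn M lam r ∧ widthOf r = n} :=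
    ⟨M.colexStateLt, hmax, rfl⟩
  refine le_antisymm ?_ (Nat.sInf_le hmem)
  refine le_csInf ⟨_, hmem⟩ ?_
  rintro n ⟨r, hrc, rfl⟩
  exact widthOf_antitone (fun u v h => colex_order_le_max hic hlams hrc h)
end

section
/- Let A = (Q, Σ, δ, s, F) be a DFA in which the initial state s has no incoming transitions and every state is reachable from s, and let u ∈ Q. For any finite string α ∈ Σ* that is a suffix of inf I_u (respectively, of sup I_u), there exists β ∈ Σ* such that βα ∈ I_u. -/
section Aux

variable {A : Type*}

lemma ofList_eq_bot_iff (w : List A) (i : ℕ) : CStr.ofList w i = ⊥ ↔ w.length ≤ i := by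
  unfold CStr.ofList
  split
  · next h => exact ⟨fun e => absurd e WithBot.coe_ne_bot, fun e => absurd h (by omega)⟩
  · next h => exact ⟨fun _ => by omega, fun _ => rfl⟩

lemma ofList_get (w : List A) (i n : ℕ) (hn : n = w.length - 1 - i) (hi : i < w.length)
    (hn' : n < w.length) : CStr.ofList w i = (w[n]'hn' : A) := by
  subst hn
  unfold CStr.ofList
  rw [dif_pos hi]
  rfl

lemma colexLt_asymm' [LinearOrder A] {f g : CStr A} (h : colexLt f g) (h' : colexLe g f) :
    False := by
  obtain ⟨i, ha, hl⟩ := h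
  rcases h' with ⟨i', ha', hl'⟩ | rfl
  · rcases lt_trichotomy i i' with hi|hi|hi
    · exact absurd (ha' i hi).symm hl.ne
    · subst hi; exact absurd hl' (not_lt.2 hl.le)
    · exact absurd (ha i' hi) hl'.ne'
  · exact lt_irrefl _ hl

lemma colexLe_at [LinearOrder A] {f g : CStr A} (h : colexLe f g) (i : ℕ)
    (hag : ∀ k, k < i → f k = g k) : f i ≤ g i := by
  rcases h with ⟨i', ha, hl⟩ | rfl
  · rcases lt_trichotomy i' i with hi|hi|hi
    · exact absurd (hag i' hi) hl.ne
    · subst hi; exact hl.le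
    · exact (ha i hi).le
  · exact le_rfl

lemma exists_append_of_agree (w α : List A)
    (h : ∀ i, i < α.length → CStr.ofList w i = CStr.ofList α i) :
    ∃ β, β ++ α = w := by
  have hlen : α.length ≤ w.length := by
    by_contra hl
    push_neg at hl
    have h1 := h w.length hl
    rw [(ofList_eq_bot_iff w w.length).2 le_rfl] at h1
    have := (ofList_eq_bot_iff α w.length).1 h1.symm
    omega
  refine ⟨w.take (w.length - α.length), ?_⟩
  have hdrop : w.drop (w.length - α.length) = α := by
    apply List.ext_getElem
    · simp; omega
    · intro p hp hq
      rw [List.getElem_drop]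
      have e := h (α.length - 1 - p) (by omega)
      rw [ofList_get w _ (w.length - α.length + p) (by omega) (by omega) (by omega),
          ofList_get α _ p (by omega) (by omega) hq] at e
      exact_mod_cast e
  conv_rhs => rw [← List.take_append_drop (w.length - α.length) w]
  rw [hdrop]

end Aux

/-- Let `γ ∈ {inf I_u, sup I_u}` for a state `u` of a DFA
whose initial state has no incoming transitions and all of whose states are
reachable.  For any finite string `α ∈ Σ*` that is a suffix of `γ` (i.e. the
last `|α|` characters of `γ` spell `α`), there exists `β ∈ Σ*` with
`βα ∈ I_u`. -/
theorem suffix_of_infimum_supremum_extends_into_Iu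
    {A Q : Type*} [LinearOrder A] [Fintype A] [Fintype Q]
    (M : PDFA A Q) (hstart : M.NoIncomingStart) (hreach : M.Reachable)
    (u : Q) (γ : CStr A)
    (hγ : IsColexGLB (CStr.ofList '' M.I u) γ ∨ IsColexLUB (CStr.ofList '' M.I u) γ)
    (α : List A) (hsuf : ∀ j, j < α.length → CStr.ofList α j = γ j) :
    ∃ β : List A, β ++ α ∈ M.I u := by
  classical
  have hγval : ∀ i, i < α.length → γ i ≠ ⊥ := by
    intro i hi e
    rw [← hsuf i hi] at e
    have := (ofList_eq_bot_iff α i).1 e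
    omega
  have key : ∀ j, j ≤ α.length → ∃ w ∈ M.I u, ∀ i, i < j → CStr.ofList w i = γ i := by
    intro j
    induction j with
    | zero =>
      intro _
      obtain ⟨w, hw⟩ := hreach u
      exact ⟨w, hw, fun i hi => absurd hi (by omega)⟩
    | succ j ih =>
      intro hj
      have hjα : j < α.length := hj
      obtain ⟨w0, hw0I, hw0ag⟩ := ih (by omega)
      by_cases hex : ∃ w ∈ M.I u, (∀ i, i < j → CStr.ofList w i = γ i) ∧ CStr.ofList w j = γ j
      · obtain ⟨w, hwI, ha, hb⟩ := hex
        refine ⟨w, hwI, fun i hi => ?_⟩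
        rcases Nat.lt_succ_iff_lt_or_eq.1 hi with h'|h'
        · exact ha i h'
        · subst h'; exact hb
      · exfalso
        push_neg at hex
        set T : Set (List A) := {w | w ∈ M.I u ∧ ∀ i, i < j → CStr.ofList w i = γ i} with hT
        have hTne : w0 ∈ T := ⟨hw0I, hw0ag⟩
        set V : Set (WithBot A) := (fun w => CStr.ofList w j) '' T with hV
        haveI : Finite (WithBot A) := inferInstanceAs (Finite (Option A))
        have hVfin : V.Finite := Set.toFinite V
        have hVne : V.Nonempty := ⟨_, w0, hTne, rfl⟩
        rcases hγ with ⟨hwf, hlb, hglb⟩ | ⟨hwf, hub, hlub⟩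
        · -- GLB case
          have hTgt : ∀ w ∈ T, γ j < CStr.ofList w j := by
            intro w hw
            refine lt_of_le_of_ne ?_ (fun e => hex w hw.1 hw.2 e.symm)
            exact colexLe_at (hlb _ ⟨w, hw.1, rfl⟩) j (fun k hk => (hw.2 k hk).symm)
          obtain ⟨b, hbV, hbmin⟩ := Set.exists_min_image V id hVfin hVne
          have hγb : γ j < b := by
            obtain ⟨w, hw, rfl⟩ := hbV
            exact hTgt w hw
          set h : CStr A := fun i => if i < j then γ i else if i = j then b else ⊥ with hh
          have hhlt : ∀ i, i < j → h i = γ i := fun i hi => if_pos hi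
          have hhj : h j = b := by simp [hh]
          have hhgt : ∀ i, j < i → h i = ⊥ := by
            intro i hi
            simp only [hh]
            rw [if_neg (by omega), if_neg (by omega)]
          have hWF : h.WF := by
            intro i hi
            rcases lt_trichotomy i j with h'|h'|h'
            · exact absurd ((hhlt i h').symm.trans hi) (hγval i (by omega))
            · have hb0 : b = ⊥ := hhj.symm.trans (h' ▸ hi)
              rw [hb0] at hγb
              exact absurd hγb not_lt_bot
            · exact hhgt _ (by omega)
          have hlow : ∀ f ∈ CStr.ofList '' M.I u, colexLe h f := by
            rintro f ⟨w, hwI, rfl⟩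
            by_cases hall : ∀ i, CStr.ofList w i = h i
            · exact Or.inr (funext fun i => (hall i).symm)
            · push_neg at hall
              obtain ⟨i, hspec, hmin⟩ :
                  ∃ i, CStr.ofList w i ≠ h i ∧ ∀ k, k < i → CStr.ofList w k = h k :=
                ⟨Nat.find hall, Nat.find_spec hall,
                  fun k hk => not_not.1 (Nat.find_min hall hk)⟩
              refine Or.inl ⟨i, fun k hk => (hmin k hk).symm, ?_⟩
              rcases lt_trichotomy i j with h'|h'|h'
              · have hle : γ i ≤ CStr.ofList w i :=
                  colexLe_at (hlb _ ⟨w, hwI, rfl⟩) i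
                    (fun k hk => ((hmin k hk).trans (hhlt k (by omega))).symm)
                rw [hhlt i h']
                exact lt_of_le_of_ne hle (fun e => hspec ((hhlt i h').symm ▸ e.symm))
              · have hwT : w ∈ T :=
                  ⟨hwI, fun k hk => (hmin k (by omega)).trans (hhlt k hk)⟩
                rw [h', hhj]
                exact lt_of_le_of_ne (hbmin _ ⟨w, hwT, rfl⟩)
                  (fun e => (h' ▸ hspec) (e.symm.trans hhj.symm))
              · rw [hhgt i h']
                exact bot_lt_iff_ne_bot.2 (fun e => hspec (e.trans (hhgt i h').symm))
          exact colexLt_asymm' ⟨j, fun k hk => (hhlt k hk).symm, by rw [hhj]; exact hγb⟩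
            (hglb h hWF hlow)
        · -- LUB case
          have hTlt : ∀ w ∈ T, CStr.ofList w j < γ j := by
            intro w hw
            refine lt_of_le_of_ne ?_ (hex w hw.1 hw.2)
            exact colexLe_at (hub _ ⟨w, hw.1, rfl⟩) j hw.2
          obtain ⟨b, hbV, hbmax⟩ := Set.exists_max_image V id hVfin hVne
          have hbγ : b < γ j := by
            obtain ⟨w, hw, rfl⟩ := hbV
            exact hTlt w hw
          haveI : Nonempty A := ⟨α[0]'(by omega)⟩
          obtain ⟨m, hm⟩ := Finite.exists_max (fun a : A => a)
          have hxm : ∀ x : WithBot A, x ≤ (m : WithBot A) := by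
            intro x
            induction x using WithBot.recBotCoe with
            | bot => exact bot_le
            | coe a => exact WithBot.coe_le_coe.2 (hm a)
          set t : WithBot A := if b = ⊥ then ⊥ else (m : WithBot A) with ht
          set h : CStr A := fun i => if i < j then γ i else if i = j then b else t with hh
          have hhlt : ∀ i, i < j → h i = γ i := fun i hi => if_pos hi
          have hhj : h j = b := by simp [hh]
          have hhgt : ∀ i, j < i → h i = t := by
            intro i hi
            simp only [hh]
            rw [if_neg (by omega), if_neg (by omega)]
          have hWF : h.WF := by
            intro i hi
            rcases lt_trichotomy i j with h'|h'|h'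
            · exact absurd ((hhlt i h').symm.trans hi) (hγval i (by omega))
            · have hb0 : b = ⊥ := hhj.symm.trans (h' ▸ hi)
              rw [hhgt (i + 1) (by omega), ht, if_pos hb0]
            · have ht0 : t = ⊥ := (hhgt i h').symm.trans hi
              rw [hhgt (i + 1) (by omega), ht0]
          have hup : ∀ f ∈ CStr.ofList '' M.I u, colexLe f h := by
            rintro f ⟨w, hwI, rfl⟩
            by_cases hall : ∀ i, CStr.ofList w i = h i
            · exact Or.inr (funext hall)
            · push_neg at hall
              obtain ⟨i, hspec, hmin⟩ :
                  ∃ i, CStr.ofList w i ≠ h i ∧ ∀ k, k < i → CStr.ofList w k = h k :=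
                ⟨Nat.find hall, Nat.find_spec hall,
                  fun k hk => not_not.1 (Nat.find_min hall hk)⟩
              refine Or.inl ⟨i, fun k hk => hmin k hk, ?_⟩
              rcases lt_trichotomy i j with h'|h'|h'
              · have hle : CStr.ofList w i ≤ γ i :=
                  colexLe_at (hub _ ⟨w, hwI, rfl⟩) i
                    (fun k hk => (hmin k hk).trans (hhlt k (by omega)))
                rw [hhlt i h']
                exact lt_of_le_of_ne hle (fun e => hspec ((hhlt i h').symm ▸ e))
              · have hwT : w ∈ T :=
                  ⟨hwI, fun k hk => (hmin k (by omega)).trans (hhlt k hk)⟩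
                rw [h', hhj]
                exact lt_of_le_of_ne (hbmax _ ⟨w, hwT, rfl⟩)
                  (fun e => (h' ▸ hspec) (e.trans hhj.symm))
              · by_cases hb0 : b = ⊥
                · exfalso
                  have h1 : CStr.ofList w j = ⊥ := (hmin j h').trans (hhj.trans hb0)
                  have h2 : CStr.ofList w i = ⊥ :=
                    (ofList_eq_bot_iff w i).2
                      (le_trans ((ofList_eq_bot_iff w j).1 h1) (by omega))
                  have h3 : h i = ⊥ := (hhgt i h').trans (by rw [ht, if_pos hb0])
                  exact hspec (h2.trans h3.symm)
                · have h3 : h i = (m : WithBot A) := (hhgt i h').trans (by rw [ht, if_neg hb0])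
                  rw [h3]
                  exact lt_of_le_of_ne (hxm _) (fun e => hspec (e.trans h3.symm))
          exact colexLt_asymm' ⟨j, fun k hk => hhlt k hk, by rw [hhj]; exact hbγ⟩
            (hlub h hWF hup)
  obtain ⟨w, hwI, hag⟩ := key α.length le_rfl
  obtain ⟨β, hβ⟩ := exists_append_of_agree w α (fun i hi => (hag i hi).trans (hsuf i hi).symm)
  exact ⟨β, hβ ▸ hwI⟩
end
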